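/- arXiv:2602.23336 — 6 statements merged into one kernel-verified Lean document; each statement's English description precedes it below -/
import Mathlib

section
/- Let n ≥ 1, let k be an integer with 1 ≤ k ≤ n, let x ∈ ℝ^n, and let y = Π_{Δ^n_k}(x). Then the projection is order preserving: for all indices i, j, if x_i ≥ x_j then y_i ≥ y_j. -/
/-!
The hypersimplex is convex, so its nearest point `y` to `x` satisfies the variational inequality
`⟪x - y, w - y⟫ ≤ 0` for every `w` in it. It is also invariant under permuting coordinates, so we
may take for `w` the vector `y` with coordinates `i` and `j` swapped. Then the inner product equals
`((x i - x j) + (y j - y i)) * (y j - y i)`, which is positive if `x j ≤ x i` and `y i < y j`.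
-/

open scoped BigOperators

/-- The (n,k)-dimensional hypersimplex: vectors in [0,1]^n whose coordinates sum to k. -/
def hypersimplex (n : ℕ) (k : ℝ) : Set (EuclideanSpace ℝ (Fin n)) :=
  {y | (∀ i, 0 ≤ y i ∧ y i ≤ 1) ∧ ∑ i, y i = k}

theorem sum_mul_sub_comp_swap {ι : Type*} [Fintype ι] [DecidableEq ι] (g f : ι → ℝ) (i j : ι) :
    ∑ l, g l * (f (Equiv.swap i j l) - f l) = (g i - g j) * (f j - f i) := by
  rcases eq_or_ne i j with rfl | hij
  · simp
  rw [Fintype.sum_eq_add i j hij fun l hl => by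
    rw [Equiv.swap_apply_of_ne_of_ne hl.1 hl.2, sub_self, mul_zero]]
  simp only [Equiv.swap_apply_left, Equiv.swap_apply_right]
  ring

theorem inner_sub_nonpos_of_forall_norm_sub_le {F : Type*} [NormedAddCommGroup F]
    [InnerProductSpace ℝ F] {K : Set F} (hK : Convex ℝ K) {x y : F} (hy : y ∈ K)
    (hmin : ∀ z ∈ K, ‖x - y‖ ≤ ‖x - z‖) :
    ∀ w ∈ K, inner ℝ (x - y) (w - y) ≤ 0 := by
  have : Nonempty K := ⟨⟨y, hy⟩⟩
  refine (norm_eq_iInf_iff_real_inner_le_zero hK hy).1 (le_antisymm ?_ ?_)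
  · exact le_ciInf fun z => hmin z z.2
  · exact ciInf_le (f := fun z : K => ‖x - z‖)
      ⟨0, by rintro _ ⟨z, rfl⟩; exact norm_nonneg _⟩ ⟨y, hy⟩

theorem convex_hypersimplex (n : ℕ) (k : ℝ) : Convex ℝ (hypersimplex n k) := by
  rintro a ⟨ha, hak⟩ b ⟨hb, hbk⟩ s t hs ht hst
  refine ⟨fun l => ?_, ?_⟩
  · simp only [PiLp.add_apply, PiLp.smul_apply, smul_eq_mul]
    constructor <;> nlinarith [ha l, hb l]
  · simp only [PiLp.add_apply, PiLp.smul_apply, smul_eq_mul, Finset.sum_add_distrib,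
      ← Finset.mul_sum, hak, hbk]
    rw [← add_mul, hst, one_mul]

theorem toLp_comp_perm_mem_hypersimplex {n : ℕ} {k : ℝ} {y : EuclideanSpace ℝ (Fin n)}
    (hy : y ∈ hypersimplex n k) (σ : Equiv.Perm (Fin n)) :
    WithLp.toLp 2 (fun l => y (σ l)) ∈ hypersimplex n k :=
  ⟨fun l => hy.1 (σ l), (Equiv.sum_comp σ _).trans hy.2⟩

theorem hypersimplex_proj_order_preserving_general (n : ℕ) (k : ℕ)
    (x y : EuclideanSpace ℝ (Fin n))
    (hy : y ∈ hypersimplex n (k : ℝ) ∧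
      ∀ z ∈ hypersimplex n (k : ℝ), ‖x - y‖ ≤ ‖x - z‖) :
    ∀ i j : Fin n, x j ≤ x i → y j ≤ y i := by
  intro i j hx
  by_contra! hyij
  have hswap := inner_sub_nonpos_of_forall_norm_sub_le (convex_hypersimplex n k) hy.1 hy.2 _
    (toLp_comp_perm_mem_hypersimplex hy.1 (Equiv.swap i j))
  have hinner : inner ℝ (x - y) (WithLp.toLp 2 (fun l => y (Equiv.swap i j l)) - y)
      = ((x i - y i) - (x j - y j)) * (y j - y i) := by
    rw [PiLp.inner_apply]
    simp only [PiLp.sub_apply, Real.inner_apply]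
    exact sum_mul_sub_comp_swap (fun l => x l - y l) (fun l => y l) i j
  rw [hinner] at hswap
  exact hswap.not_gt (mul_pos (by linarith) (by linarith))

/-- The Euclidean projection y = Π_{Δ^n_k}(x) is order preserving: if x_i ≥ x_j
then y_i ≥ y_j. -/
theorem hypersimplex_proj_order_preserving (n : ℕ) (hn : 1 ≤ n) (k : ℕ)
    (hk1 : 1 ≤ k) (hk2 : k ≤ n)
    (x y : EuclideanSpace ℝ (Fin n))
    (hy : y ∈ hypersimplex n (k : ℝ) ∧
      ∀ z ∈ hypersimplex n (k : ℝ), ‖x - y‖ ≤ ‖x - z‖) :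
    ∀ i j : Fin n, x j ≤ x i → y j ≤ y i :=
  hypersimplex_proj_order_preserving_general n k x y hy
end

section
/- Let n ≥ 1, let k be an integer with 1 ≤ k ≤ n, and let x ∈ ℝ^n. Then there exists λ ∈ ℝ such that the Euclidean projection y = Π_{Δ^n_k}(x) satisfies y_i = min(max(x_i − λ, 0), 1) for every index i, and ∑_i min(max(x_i − λ, 0), 1) = k. -/
/-!
The map `λ ↦ ∑ i, clip (x i - λ)` (clipping to `[0,1]`) is continuous, equals `n` for `λ` very
negative and `0` for `λ` very positive, so by the intermediate value theorem some `λ` makes the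
clipped vector `c` lie in `Δ^n_k`. Coordinatewise, `c i` is the projection of `x i - λ` onto `[0,1]`,
so `(x i - λ - c i) (z i - c i) ≤ 0` for every `z ∈ Δ^n_k`; summing and using `∑ z i = ∑ c i` gives
the variational inequality `⟪x - c, z - c⟫ ≤ 0`, which characterises `c` as the unique nearest point.
-/

open scoped BigOperators

theorem sub_clip_mul_sub_clip_nonpos (a : ℝ) {z : ℝ} (hz0 : 0 ≤ z) (hz1 : z ≤ 1) :
    (a - min (max a 0) 1) * (z - min (max a 0) 1) ≤ 0 := by
  rcases lt_or_ge a 0 with ha | ha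
  · rw [max_eq_right ha.le, min_eq_left zero_le_one]
    nlinarith
  rcases le_or_gt a 1 with ha1 | ha1
  · rw [max_eq_left ha, min_eq_left ha1, sub_self, zero_mul]
  · rw [max_eq_left ha, min_eq_right ha1.le]
    nlinarith

section Clip

variable {ι : Type*} [Fintype ι]

theorem continuous_sum_clip (x : ι → ℝ) :
    Continuous fun lam => ∑ i, min (max (x i - lam) 0) 1 := by
  fun_prop

theorem exists_sum_clip_eq (x : ι → ℝ) {k : ℝ} (hk0 : 0 ≤ k) (hk : k ≤ Fintype.card ι) :
    ∃ lam, ∑ i, min (max (x i - lam) 0) 1 = k := by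
  have hx (i : ι) : |x i| ≤ ‖x‖ := norm_le_pi_norm x i
  have hlow : ∑ i, min (max (x i - (-‖x‖ - 1)) 0) 1 = Fintype.card ι := by
    have h (i : ι) : min (max (x i - (-‖x‖ - 1)) 0) 1 = 1 := by
      have := neg_abs_le (x i)
      rw [max_eq_left (by linarith [hx i]), min_eq_right (by linarith [hx i])]
    simp [h]
  have hhigh : ∑ i, min (max (x i - ‖x‖) 0) 1 = 0 := by
    have h (i : ι) : min (max (x i - ‖x‖) 0) 1 = 0 := by
      have := le_abs_self (x i)
      rw [max_eq_right (by linarith [hx i]), min_eq_left zero_le_one]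
    simp [h]
  obtain ⟨lam, -, hlam⟩ := intermediate_value_Icc' (by linarith [norm_nonneg x])
    (continuous_sum_clip x).continuousOn (show k ∈ Set.Icc _ _ from ⟨hhigh ▸ hk0, hlow ▸ hk⟩)
  exact ⟨lam, hlam⟩

theorem sum_sub_clip_mul_sub_clip_nonpos (x z : ι → ℝ) (lam : ℝ)
    (hz : ∀ i, 0 ≤ z i ∧ z i ≤ 1) (hsum : ∑ i, z i = ∑ i, min (max (x i - lam) 0) 1) :
    ∑ i, (x i - min (max (x i - lam) 0) 1) * (z i - min (max (x i - lam) 0) 1) ≤ 0 := by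
  set c : ι → ℝ := fun i => min (max (x i - lam) 0) 1
  have hsum0 : ∑ i, (z i - c i) = 0 := by rw [Finset.sum_sub_distrib, hsum, sub_self]
  calc ∑ i, (x i - c i) * (z i - c i)
      = lam * ∑ i, (z i - c i) + ∑ i, (x i - lam - c i) * (z i - c i) := by
        rw [Finset.mul_sum, ← Finset.sum_add_distrib]
        exact Finset.sum_congr rfl fun i _ => by ring
    _ ≤ 0 := by
        rw [hsum0, mul_zero, zero_add]
        exact Finset.sum_nonpos fun i _ => sub_clip_mul_sub_clip_nonpos _ (hz i).1 (hz i).2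

end Clip

theorem eq_of_norm_sub_le_of_inner_sub_nonpos {F : Type*} [NormedAddCommGroup F]
    [InnerProductSpace ℝ F] {x y c : F} (hinner : inner ℝ (x - c) (y - c) ≤ 0)
    (hnorm : ‖x - y‖ ≤ ‖x - c‖) : y = c := by
  have hexpand : ‖x - y‖ ^ 2 = ‖x - c‖ ^ 2 - 2 * inner ℝ (x - c) (y - c) + ‖y - c‖ ^ 2 := by
    rw [← norm_sub_sq_real, sub_sub_sub_cancel_right]
  have hsq : ‖y - c‖ ^ 2 ≤ 0 := by
    nlinarith [norm_nonneg (x - y), norm_nonneg (x - c)]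
  simpa [sub_eq_zero] using hsq

theorem hypersimplex_proj_clip_form_general (n : ℕ) (k : ℕ)
    (hk2 : k ≤ n)
    (x y : EuclideanSpace ℝ (Fin n))
    (hy : y ∈ hypersimplex n (k : ℝ) ∧
      ∀ z ∈ hypersimplex n (k : ℝ), ‖x - y‖ ≤ ‖x - z‖) :
    ∃ lam : ℝ, (∀ i, y i = min (max (x i - lam) 0) 1) ∧
      ∑ i, min (max (x i - lam) 0) 1 = (k : ℝ) := by
  obtain ⟨⟨hy01, hysum⟩, hymin⟩ := hy
  obtain ⟨lam, hlam⟩ := exists_sum_clip_eq (fun i => x i) k.cast_nonneg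
    (by simpa using (Nat.cast_le (α := ℝ)).mpr hk2)
  set c : EuclideanSpace ℝ (Fin n) := WithLp.toLp 2 fun i => min (max (x i - lam) 0) 1
  have hc : c ∈ hypersimplex n k :=
    ⟨fun i => ⟨le_min (le_max_right _ _) zero_le_one, min_le_right _ _⟩, hlam⟩
  have hinner : inner ℝ (x - c) (y - c) ≤ 0 := by
    rw [PiLp.inner_apply]
    convert sum_sub_clip_mul_sub_clip_nonpos (fun i => x i) (fun i => y i) lam hy01
      (hysum.trans hlam.symm) using 2 with i
    simp [c, mul_comm]
  have hyc : y = c := eq_of_norm_sub_le_of_inner_sub_nonpos hinner (hymin c hc)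
  exact ⟨lam, fun i => by rw [hyc], hlam⟩

/-- There exists λ ∈ ℝ such that the Euclidean projection y = Π_{Δ^n_k}(x) satisfies
y_i = clip(x_i − λ, 0, 1) for every i, and the clipped values sum to k. -/
theorem hypersimplex_proj_clip_form (n : ℕ) (hn : 1 ≤ n) (k : ℕ)
    (hk1 : 1 ≤ k) (hk2 : k ≤ n)
    (x y : EuclideanSpace ℝ (Fin n))
    (hy : y ∈ hypersimplex n (k : ℝ) ∧
      ∀ z ∈ hypersimplex n (k : ℝ), ‖x - y‖ ≤ ‖x - z‖) :
    ∃ lam : ℝ, (∀ i, y i = min (max (x i - lam) 0) 1) ∧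
      ∑ i, min (max (x i - lam) 0) 1 = (k : ℝ) :=
  hypersimplex_proj_clip_form_general n k hk2 x y hy
end

section
/- Let n ≥ 1, let k be an integer with 1 ≤ k ≤ n, and suppose x ∈ ℝ^n has nonincreasing coordinates, i.e., x_1 ≥ x_2 ≥ ⋯ ≥ x_n. Then the Euclidean projection of x onto Δ^n_k coincides with the unique minimizer of ‖x − y‖₂² over the set {y ∈ ℝ^n : 0 ≤ y_i ≤ 1 for all i, ∑_i y_i = k, and y_1 ≥ y_2 ≥ ⋯ ≥ y_n}; that is, adding the monotonicity constraint does not change the solution. -/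
/-!
The hypersimplex is convex and `‖x - ·‖²` is strictly convex, so the nearest point `y` is
unique. The hypersimplex is also invariant under permuting coordinates, and swapping `y i` and
`y j` changes `‖x - y‖²` by `-2 (x i - x j) (y j - y i)`. So if `y` were out of order at `i < j`
while `x` is in order, the swap would give a second nearest point; hence `y` is antitone, and
then it is in particular the unique minimizer over the antitone part of the hypersimplex.
-/

open scoped BigOperators

section InnerProductSpace

variable {E : Type*} [NormedAddCommGroup E] [InnerProductSpace ℝ E] {K : Set E}

/-- `‖x - w‖² - ‖w‖² = ‖x‖² - 2⟪x, w⟫` is affine in `w`, so `‖x - ·‖²` is `2`-strongly convex. -/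
theorem strictConvexOn_norm_sub_sq (hK : Convex ℝ K) (x : E) :
    StrictConvexOn ℝ K fun w ↦ ‖x - w‖ ^ 2 := by
  refine (strongConvexOn_iff_convex.2 ?_).strictConvexOn two_pos (m := 2)
  refine ((convexOn_const (‖x‖ ^ 2) hK).sub (((2 : ℝ) • innerₗ E x).concaveOn hK)).congr
    fun w _ ↦ ?_
  simp [norm_sub_sq_real]

theorem Convex.eq_of_isMinOn_norm_sub_sq (hK : Convex ℝ K) {x y z : E} (hz : z ∈ K)
    (hy : y ∈ K) (hymin : IsMinOn (fun w ↦ ‖x - w‖ ^ 2) K y)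
    (hzy : ‖x - z‖ ^ 2 ≤ ‖x - y‖ ^ 2) : z = y :=
  (strictConvexOn_norm_sub_sq hK x).eq_of_isMinOn (fun _ hw ↦ hzy.trans (hymin hw)) hymin hz hy

end InnerProductSpace

theorem EuclideanSpace.norm_sub_comp_swap_sq {ι : Type*} [Fintype ι] [DecidableEq ι]
    (x y : EuclideanSpace ℝ ι) {i j : ι} (hij : i ≠ j) :
    ‖x - WithLp.toLp 2 (y ∘ Equiv.swap i j)‖ ^ 2 =
      ‖x - y‖ ^ 2 - 2 * (x i - x j) * (y j - y i) := by
  rw [eq_sub_iff_add_eq, ← eq_sub_iff_add_eq', EuclideanSpace.real_norm_sq_eq,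
    EuclideanSpace.real_norm_sq_eq, ← Finset.sum_sub_distrib]
  rw [Fintype.sum_eq_add i j hij fun l hl ↦ by simp [Equiv.swap_apply_of_ne_of_ne hl.1 hl.2]]
  simp only [PiLp.sub_apply, Function.comp_apply, Equiv.swap_apply_left,
    Equiv.swap_apply_right]
  ring

theorem comp_perm_mem_hypersimplex {n : ℕ} {k : ℝ} {y : EuclideanSpace ℝ (Fin n)}
    (hy : y ∈ hypersimplex n k) (σ : Equiv.Perm (Fin n)) :
    WithLp.toLp 2 (y ∘ σ) ∈ hypersimplex n k :=
  ⟨fun i ↦ hy.1 (σ i), (Equiv.sum_comp σ y).trans hy.2⟩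

theorem antitone_of_isMinOn_hypersimplex {n : ℕ} {k : ℝ} {x y : EuclideanSpace ℝ (Fin n)}
    (hx : Antitone x) (hy : y ∈ hypersimplex n k)
    (hymin : IsMinOn (fun w ↦ ‖x - w‖ ^ 2) (hypersimplex n k) y) : Antitone y := by
  intro i j hij
  by_contra! hlt
  have hne : i ≠ j := by rintro rfl; exact hlt.false
  set z := WithLp.toLp 2 (y ∘ Equiv.swap i j)
  have hzy : ‖x - z‖ ^ 2 ≤ ‖x - y‖ ^ 2 := by
    rw [EuclideanSpace.norm_sub_comp_swap_sq x y hne]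
    nlinarith [hx hij]
  have hzi : z i = y j := by simp [z]
  have hz_eq : z = y := (convex_hypersimplex n k).eq_of_isMinOn_norm_sub_sq
    (comp_perm_mem_hypersimplex hy _) hy hymin hzy
  exact hlt.ne' (by rw [← hzi, hz_eq])

theorem hypersimplex_proj_isotonic_general (n : ℕ) (k : ℕ)
    (x : EuclideanSpace ℝ (Fin n)) (hx : ∀ i j : Fin n, i ≤ j → x j ≤ x i)
    (y : EuclideanSpace ℝ (Fin n))
    (hy : y ∈ hypersimplex n (k : ℝ) ∧
      ∀ z ∈ hypersimplex n (k : ℝ), ‖x - y‖ ≤ ‖x - z‖) :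
    (∀ i j : Fin n, i ≤ j → y j ≤ y i) ∧
    (∀ z ∈ hypersimplex n (k : ℝ), (∀ i j : Fin n, i ≤ j → z j ≤ z i) →
      ‖x - y‖ ^ 2 ≤ ‖x - z‖ ^ 2) ∧
    (∀ z ∈ hypersimplex n (k : ℝ), (∀ i j : Fin n, i ≤ j → z j ≤ z i) →
      (∀ w ∈ hypersimplex n (k : ℝ), (∀ i j : Fin n, i ≤ j → w j ≤ w i) →
        ‖x - z‖ ^ 2 ≤ ‖x - w‖ ^ 2) → z = y) := by
  obtain ⟨hyK, hynear⟩ := hy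
  have hymin : IsMinOn (fun w ↦ ‖x - w‖ ^ 2) (hypersimplex n k) y := fun z hz ↦
    pow_le_pow_left₀ (norm_nonneg _) (hynear z hz) 2
  have hyanti : Antitone y := antitone_of_isMinOn_hypersimplex hx hyK hymin
  refine ⟨hyanti, fun z hz _ ↦ hymin hz, fun z hz _ hzmin ↦ ?_⟩
  exact (convex_hypersimplex n k).eq_of_isMinOn_norm_sub_sq hz hyK hymin (hzmin y hyK hyanti)

/-- If x has nonincreasing coordinates, then the Euclidean projection of x onto
Δ^n_k coincides with the unique minimizer of ‖x − y‖² over the monotone subset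
{y ∈ Δ^n_k : y_1 ≥ ⋯ ≥ y_n}: adding the monotonicity constraint does not change
the solution. -/
theorem hypersimplex_proj_isotonic (n : ℕ) (hn : 1 ≤ n) (k : ℕ)
    (hk1 : 1 ≤ k) (hk2 : k ≤ n)
    (x : EuclideanSpace ℝ (Fin n)) (hx : ∀ i j : Fin n, i ≤ j → x j ≤ x i)
    (y : EuclideanSpace ℝ (Fin n))
    (hy : y ∈ hypersimplex n (k : ℝ) ∧
      ∀ z ∈ hypersimplex n (k : ℝ), ‖x - y‖ ≤ ‖x - z‖) :
    (∀ i j : Fin n, i ≤ j → y j ≤ y i) ∧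
    (∀ z ∈ hypersimplex n (k : ℝ), (∀ i j : Fin n, i ≤ j → z j ≤ z i) →
      ‖x - y‖ ^ 2 ≤ ‖x - z‖ ^ 2) ∧
    (∀ z ∈ hypersimplex n (k : ℝ), (∀ i j : Fin n, i ≤ j → z j ≤ z i) →
      (∀ w ∈ hypersimplex n (k : ℝ), (∀ i j : Fin n, i ≤ j → w j ≤ w i) →
        ‖x - z‖ ^ 2 ≤ ‖x - w‖ ^ 2) → z = y) :=
  hypersimplex_proj_isotonic_general n k x hx y hy
end

section
/- Let n ≥ 1, let k be an integer with 1 ≤ k ≤ n, and let x ∈ ℝ^n have pairwise distinct coordinates. Then the soft projection recovers the hard binary-argmax@k in the zero-temperature limit: Π_{Δ^n_k}(x/τ) → r_k(x) as τ → 0⁺, where r_k(x) is the indicator vector of the k largest coordinates of x. -/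
/-! Testing optimality of `P τ` against `r ∈ Δ` gives `⟪x, r - P τ⟫ ≤ τ ‖r‖² / 2`.
On the other hand `r` is a sharp maximiser of `⟪x, ·⟫` on the hypersimplex: if a threshold `c`
separates the top coordinates from the others with margin `ε > 0`, then
`ε ‖r - y‖² ≤ ⟪x, r - y⟫` for every `y ∈ Δ`. Hence `‖P τ - r‖² ≤ τ ‖r‖² / (2ε) → 0`. -/

open scoped BigOperators

open Filter Topology RealInnerProductSpace

theorem exists_separating_margin {ι : Type*} [Fintype ι] (x : ι → ℝ) (S : Finset ι)
    (h : ∀ i ∈ S, ∀ j ∉ S, x j < x i) :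
    ∃ c, ∃ ε > 0, (∀ i ∈ S, c + ε ≤ x i) ∧ ∀ j ∉ S, x j + ε ≤ c := by
  classical
  obtain ⟨a, hlt_a, ha_lt⟩ := Finset.exists_between' (Sᶜ.image x) (S.image x) (by
    simp only [Finset.forall_mem_image, Finset.mem_compl]
    exact fun j hj i hi => h i hi j hj)
  obtain ⟨b, hlt_b, hb_lt⟩ := Finset.exists_between' (Sᶜ.image x) {a} (by simpa using hlt_a)
  simp only [Finset.forall_mem_image, Finset.mem_compl, Finset.mem_singleton,
    forall_eq] at ha_lt hlt_b hb_lt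
  refine ⟨(a + b) / 2, (a - b) / 2, by linarith, fun i hi => ?_, fun j hj => ?_⟩
  · linarith [ha_lt hi]
  · linarith [hlt_b hj]

theorem inner_sub_le_of_norm_smul_sub_le {E : Type*} [NormedAddCommGroup E]
    [InnerProductSpace ℝ E] {x y r : E} {τ : ℝ} (hτ : 0 < τ)
    (h : ‖τ⁻¹ • x - y‖ ≤ ‖τ⁻¹ • x - r‖) : ⟪x, r - y⟫ ≤ τ / 2 * ‖r‖ ^ 2 := by
  have hsq := pow_le_pow_left₀ (norm_nonneg _) h 2
  rw [norm_sub_sq_real, norm_sub_sq_real, real_inner_smul_left, real_inner_smul_left] at hsq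
  have hscaled : τ⁻¹ * ⟪x, r - y⟫ ≤ ‖r‖ ^ 2 / 2 := by
    rw [inner_sub_right]; nlinarith [sq_nonneg ‖y‖]
  rw [inv_mul_le_iff₀ hτ] at hscaled
  linarith

theorem margin_mul_norm_sq_le_inner {ι : Type*} [Fintype ι] [DecidableEq ι]
    {x y r : EuclideanSpace ℝ ι} {S : Finset ι} {c ε : ℝ} (hε : 0 ≤ ε) (hS : ∀ i ∈ S, c + ε ≤ x i)
    (hSc : ∀ i ∉ S, x i + ε ≤ c) (hr : ∀ i, r i = if i ∈ S then 1 else 0)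
    (hy : ∀ i, 0 ≤ y i ∧ y i ≤ 1) (hsum : ∑ i, y i = ∑ i, r i) :
    ε * ‖r - y‖ ^ 2 ≤ ⟪x, r - y⟫ := by
  have hinner : ⟪x, r - y⟫ = ∑ i, (x i - c) * (r i - y i) + c * (∑ i, r i - ∑ i, y i) := by
    simp only [PiLp.inner_apply, RCLike.inner_apply, conj_trivial, PiLp.sub_apply,
      ← Finset.sum_sub_distrib, Finset.mul_sum, ← Finset.sum_add_distrib]
    exact Finset.sum_congr rfl fun i _ => by ring
  rw [hinner, hsum, sub_self, mul_zero, add_zero, EuclideanSpace.norm_sq_eq, Finset.mul_sum]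
  -- `(r i - y i)² ≤ |r i - y i|`, and `x i - c` has the sign of `r i - y i` and size `≥ ε`.
  refine Finset.sum_le_sum fun i _ => ?_
  obtain ⟨hy0, hy1⟩ := hy i
  simp only [PiLp.sub_apply, Real.norm_eq_abs, sq_abs, hr]
  split_ifs with hi
  · nlinarith [mul_nonneg (sub_nonneg.2 (hS i hi)) (sub_nonneg.2 hy1),
      mul_nonneg hε (mul_nonneg (sub_nonneg.2 hy1) hy0)]
  · nlinarith [mul_nonneg (sub_nonneg.2 (hSc i hi)) hy0,
      mul_nonneg hε (mul_nonneg (sub_nonneg.2 hy1) hy0)]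

theorem tendsto_nhdsGT_zero_of_dist_sq_le {α : Type*} [PseudoMetricSpace α] {f : ℝ → α}
    {a : α} {C : ℝ} (h : ∀ τ > 0, dist (f τ) a ^ 2 ≤ C * τ) : Tendsto f (𝓝[>] 0) (𝓝 a) := by
  rw [tendsto_iff_dist_tendsto_zero]
  refine squeeze_zero' (.of_forall fun τ => dist_nonneg) ?_ (g := fun τ => √(C * τ)) ?_
  · filter_upwards [self_mem_nhdsWithin] with τ hτ
    exact Real.le_sqrt_of_sq_le (h τ hτ)
  · have hC : Continuous fun τ : ℝ => √(C * τ) := (continuous_const.mul continuous_id).sqrt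
    exact (hC.tendsto' 0 0 (by simp)).mono_left nhdsWithin_le_nhds

theorem soft_binary_argmax_zero_temperature_limit_general (n : ℕ) (k : ℕ)
    (x : EuclideanSpace ℝ (Fin n))
    (S : Finset (Fin n)) (hScard : S.card = k)
    (hStop : ∀ i ∈ S, ∀ j ∉ S, x j < x i)
    (r : EuclideanSpace ℝ (Fin n))
    (hr : ∀ i, r i = if i ∈ S then 1 else 0)
    (P : ℝ → EuclideanSpace ℝ (Fin n))
    (hP : ∀ τ : ℝ, 0 < τ → P τ ∈ hypersimplex n (k : ℝ) ∧
      ∀ y ∈ hypersimplex n (k : ℝ), ‖τ⁻¹ • x - P τ‖ ≤ ‖τ⁻¹ • x - y‖) :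
    Filter.Tendsto P (nhdsWithin 0 (Set.Ioi 0)) (nhds r) := by
  obtain ⟨c, ε, hε, hS, hSc⟩ := exists_separating_margin x S hStop
  have hr_mem : r ∈ hypersimplex n k := by
    refine ⟨fun i => ?_, ?_⟩
    · rw [hr]; split_ifs <;> norm_num
    · simp [hr, hScard]
  refine tendsto_nhdsGT_zero_of_dist_sq_le (C := ‖r‖ ^ 2 / (2 * ε)) fun τ hτ => ?_
  obtain ⟨⟨hy, hsum⟩, hopt⟩ := hP τ hτ
  have hgap := margin_mul_norm_sq_le_inner hε.le hS hSc hr hy (hsum.trans hr_mem.2.symm)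
  have hproj := inner_sub_le_of_norm_smul_sub_le hτ (hopt r hr_mem)
  rw [dist_comm, dist_eq_norm, div_mul_eq_mul_div, le_div_iff₀ (by positivity)]
  linarith

/-- In the zero-temperature limit, the soft projection recovers the hard
binary-argmax@k: Π_{Δ^n_k}(x/τ) → r_k(x) as τ → 0⁺, where r_k(x) is the
indicator vector of the k largest coordinates of x (assumed pairwise distinct).
Here P τ is the Euclidean projection of x/τ onto the hypersimplex. -/
theorem soft_binary_argmax_zero_temperature_limit (n : ℕ) (hn : 1 ≤ n) (k : ℕ)
    (hk1 : 1 ≤ k) (hk2 : k ≤ n)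
    (x : EuclideanSpace ℝ (Fin n)) (hx : Function.Injective x)
    (S : Finset (Fin n)) (hScard : S.card = k)
    (hStop : ∀ i ∈ S, ∀ j ∉ S, x j < x i)
    (r : EuclideanSpace ℝ (Fin n))
    (hr : ∀ i, r i = if i ∈ S then 1 else 0)
    (P : ℝ → EuclideanSpace ℝ (Fin n))
    (hP : ∀ τ : ℝ, 0 < τ → P τ ∈ hypersimplex n (k : ℝ) ∧
      ∀ y ∈ hypersimplex n (k : ℝ), ‖τ⁻¹ • x - P τ‖ ≤ ‖τ⁻¹ • x - y‖) :
    Filter.Tendsto P (nhdsWithin 0 (Set.Ioi 0)) (nhds r) :=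
  soft_binary_argmax_zero_temperature_limit_general n k x S hScard hStop r hr P hP
end

section
/- Let n ≥ 1, let k be an integer with 1 ≤ k ≤ n, and let x ∈ ℝ^n. Set c = (∑_{i=1}^n x_i − k)/n. If 0 < x_i − c < 1 for every index i, then the Euclidean projection of x onto Δ^n_k is given coordinatewise by Π_{Δ^n_k}(x)_i = x_i − c. -/
/-!
Shifting `x` by the constant `c` along the all-ones direction lands at a point `p` of the
hyperplane `∑ yᵢ = k`, and the hypothesis puts `p` inside the cube, so `p` lies in the
hypersimplex. Since `x - p` is constant it is orthogonal to `p - y` for every `y` of the same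
coordinate sum, and Pythagoras makes `p` the unique nearest point.
-/

open scoped BigOperators

open scoped InnerProductSpace

theorem eq_of_inner_sub_eq_zero_of_norm_sub_le {E : Type*} [NormedAddCommGroup E]
    [InnerProductSpace ℝ E] {x p y : E} (horth : ⟪x - p, p - y⟫_ℝ = 0)
    (hle : ‖x - y‖ ≤ ‖x - p‖) : y = p := by
  have hpyth : ‖x - y‖ * ‖x - y‖ = ‖x - p‖ * ‖x - p‖ + ‖p - y‖ * ‖p - y‖ := by
    rw [← sub_add_sub_cancel x p y, norm_add_sq_eq_norm_sq_add_norm_sq_real horth]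
  have hpy : ‖p - y‖ = 0 := by
    nlinarith [norm_nonneg (x - y), norm_nonneg (p - y)]
  exact (sub_eq_zero.mp (norm_eq_zero.mp hpy)).symm

theorem sum_sub_sum_sub_div_card {ι : Type*} [Fintype ι] [Nonempty ι] (x : ι → ℝ) (k : ℝ) :
    ∑ i, (x i - (∑ j, x j - k) / Fintype.card ι) = k := by
  have hcard : (Fintype.card ι : ℝ) ≠ 0 := Nat.cast_ne_zero.mpr Fintype.card_ne_zero
  rw [Finset.sum_sub_distrib, Finset.sum_const, Finset.card_univ, nsmul_eq_mul,
    mul_div_cancel₀ _ hcard]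
  ring

theorem EuclideanSpace.inner_eq_mul_sum_of_forall_eq {ι : Type*} [Fintype ι]
    {u v : EuclideanSpace ℝ ι} {c : ℝ} (hu : ∀ i, u i = c) :
    ⟪u, v⟫_ℝ = c * ∑ i, v i := by
  simp only [PiLp.inner_apply, RCLike.inner_apply, conj_trivial, hu, Finset.mul_sum]
  exact Finset.sum_congr rfl fun i _ => mul_comm _ _

theorem hypersimplex_proj_interior_formula_general (n : ℕ) (k : ℕ)
    (x : EuclideanSpace ℝ (Fin n))
    (hx : ∀ i, 0 < x i - (∑ j, x j - (k : ℝ)) / (n : ℝ) ∧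
      x i - (∑ j, x j - (k : ℝ)) / (n : ℝ) < 1)
    (y : EuclideanSpace ℝ (Fin n))
    (hy : y ∈ hypersimplex n (k : ℝ) ∧
      ∀ z ∈ hypersimplex n (k : ℝ), ‖x - y‖ ≤ ‖x - z‖) :
    ∀ i, y i = x i - (∑ j, x j - (k : ℝ)) / (n : ℝ) := by
  intro i
  have : Nonempty (Fin n) := ⟨i⟩
  set c : ℝ := (∑ j, x j - (k : ℝ)) / (n : ℝ)
  set p : EuclideanSpace ℝ (Fin n) := WithLp.toLp 2 fun j => x j - c
  have hpsum : ∑ j, p j = k := by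
    simpa only [Fintype.card_fin] using sum_sub_sum_sub_div_card (fun j => x j) (k : ℝ)
  have hp : p ∈ hypersimplex n k := ⟨fun j => ⟨(hx j).1.le, (hx j).2.le⟩, hpsum⟩
  have horth : ⟪x - p, p - y⟫_ℝ = 0 := by
    rw [EuclideanSpace.inner_eq_mul_sum_of_forall_eq (c := c) fun j => by simp [p]]
    simp only [PiLp.sub_apply, Finset.sum_sub_distrib, hpsum, hy.1.2, sub_self, mul_zero]
  rw [eq_of_inner_sub_eq_zero_of_norm_sub_le horth (hy.2 p hp)]

/-- Set c = (∑ x_i − k)/n.  If 0 < x_i − c < 1 for every i, then the Euclidean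
projection of x onto Δ^n_k is given coordinatewise by y_i = x_i − c. -/
theorem hypersimplex_proj_interior_formula (n : ℕ) (hn : 1 ≤ n) (k : ℕ)
    (hk1 : 1 ≤ k) (hk2 : k ≤ n)
    (x : EuclideanSpace ℝ (Fin n))
    (hx : ∀ i, 0 < x i - (∑ j, x j - (k : ℝ)) / (n : ℝ) ∧
      x i - (∑ j, x j - (k : ℝ)) / (n : ℝ) < 1)
    (y : EuclideanSpace ℝ (Fin n))
    (hy : y ∈ hypersimplex n (k : ℝ) ∧
      ∀ z ∈ hypersimplex n (k : ℝ), ‖x - y‖ ≤ ‖x - z‖) :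
    ∀ i, y i = x i - (∑ j, x j - (k : ℝ)) / (n : ℝ) :=
  hypersimplex_proj_interior_formula_general n k x hx y hy
end

section
/- Let n ≥ 1, let k be an integer with 1 ≤ k ≤ n, let τ > 0, and let y ∈ ℝ^n. Suppose x ∈ ℝ^n satisfies 0 < x_i/τ − c < 1 for every index i, where c = (∑_{i=1}^n x_i/τ − k)/n. Then the HyperSimplex loss L(x) = ½·‖Π_{Δ^n_k}(x/τ) − y‖₂² is differentiable at x, and its gradient is given coordinatewise by (∇L(x))_i = (1/τ)·[(ŷ_i − y_i) − (1/n)·∑_{j=1}^n (ŷ_j − y_j)], where ŷ = Π_{Δ^n_k}(x/τ). -/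
/-!
If every coordinate of `w - ((∑ w - k) / n) • 𝟙` lies strictly in `(0, 1)` (an open condition on
`w`), that vector lies in the hypersimplex and differs from `w` by a multiple of `𝟙`, which is
orthogonal to the hyperplane `∑ = k`; by Pythagoras it is the projection of `w`. So near `x` the
projection is affine and the loss is `½ ‖A z - b‖²` with `A = τ⁻¹ • M`, `M` the self-adjoint
mean-centering map; its gradient is `A† (A x - b) = τ⁻¹ • M (ŷ - y)`.
-/

open scoped BigOperators RealInnerProductSpace
open Finset Filter Topology

section InnerProductSpace

variable {E F : Type*} [NormedAddCommGroup E] [InnerProductSpace ℝ E]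
  [NormedAddCommGroup F] [InnerProductSpace ℝ F]

theorem eq_of_norm_sub_le_of_inner_eq_zero {z p q : E} (hle : ‖z - p‖ ≤ ‖z - q‖)
    (horth : ⟪z - q, p - q⟫ = 0) : p = q := by
  have hpyth : ‖z - p‖ ^ 2 = ‖z - q‖ ^ 2 + ‖p - q‖ ^ 2 := by
    simpa only [sq, sub_sub_sub_cancel_right] using norm_sub_sq_eq_norm_sq_add_norm_sq_real horth
  have hsq : ‖p - q‖ ^ 2 = 0 :=
    le_antisymm (by nlinarith [pow_le_pow_left₀ (norm_nonneg _) hle 2]) (sq_nonneg _)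
  simpa [sub_eq_zero] using hsq

theorem hasGradientAt_half_norm_sq_sub [CompleteSpace E] [CompleteSpace F]
    (A : E →L[ℝ] F) (b : F) (x : E) :
    HasGradientAt (fun z => (1 / 2 : ℝ) * ‖A z - b‖ ^ 2) (A.adjoint (A x - b)) x := by
  rw [hasGradientAt_iff_hasFDerivAt]
  refine (((A.hasFDerivAt.sub_const b).norm_sq).const_mul (1 / 2 : ℝ)).congr_fderiv ?_
  ext d
  simp [ContinuousLinearMap.adjoint_inner_left]

end InnerProductSpace

section MeanCentering

variable {n : ℕ}

noncomputable def meanCentering (n : ℕ) :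
    EuclideanSpace ℝ (Fin n) →L[ℝ] EuclideanSpace ℝ (Fin n) :=
  ContinuousLinearMap.id ℝ _ -
    ((n : ℝ)⁻¹ • ∑ j, EuclideanSpace.proj j).smulRight (WithLp.toLp 2 fun _ => 1)

@[simp]
theorem meanCentering_apply (z : EuclideanSpace ℝ (Fin n)) (i : Fin n) :
    meanCentering n z i = z i - (n : ℝ)⁻¹ * ∑ j, z j := by
  simp [meanCentering]

theorem inner_meanCentering_left (u v : EuclideanSpace ℝ (Fin n)) :
    ⟪meanCentering n u, v⟫ = ∑ i, u i * v i - (n : ℝ)⁻¹ * (∑ i, u i) * ∑ i, v i := by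
  simp only [PiLp.inner_apply, meanCentering_apply, RCLike.inner_apply, conj_trivial, mul_sub,
    sum_sub_distrib, ← sum_mul]
  simp only [mul_comm]

theorem isSelfAdjoint_meanCentering : IsSelfAdjoint (meanCentering n) := by
  rw [ContinuousLinearMap.isSelfAdjoint_iff_isSymmetric]
  intro u v
  rw [ContinuousLinearMap.coe_coe, inner_meanCentering_left, real_inner_comm,
    inner_meanCentering_left]
  simp only [mul_comm]
  ring

theorem sum_meanCentering (hn : n ≠ 0) (z : EuclideanSpace ℝ (Fin n)) :
    ∑ i, meanCentering n z i = 0 := by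
  simp [sum_sub_distrib, hn]

end MeanCentering

section Hypersimplex

variable {n : ℕ} {k : ℝ}

theorem meanCentering_add_const_mem_hypersimplex (hn : n ≠ 0) {z : EuclideanSpace ℝ (Fin n)}
    (hz : ∀ i, meanCentering n z i + k / n ∈ Set.Icc 0 1) :
    meanCentering n z + WithLp.toLp 2 (fun _ => k / n) ∈ hypersimplex n k := by
  refine ⟨fun i => hz i, ?_⟩
  simp only [PiLp.add_apply, sum_add_distrib, sum_meanCentering hn, sum_const, card_univ,
    Fintype.card_fin, nsmul_eq_mul, zero_add]
  field_simp

/-- A vector parallel to `𝟙` is orthogonal to the hyperplane containing the hypersimplex. -/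
theorem eq_of_mem_hypersimplex_of_forall_sub_eq {z p q : EuclideanSpace ℝ (Fin n)}
    (hp : p ∈ hypersimplex n k) (hmin : ∀ w ∈ hypersimplex n k, ‖z - p‖ ≤ ‖z - w‖)
    (hq : q ∈ hypersimplex n k) {c : ℝ} (hc : ∀ i, z i - q i = c) : p = q := by
  refine eq_of_norm_sub_le_of_inner_eq_zero (hmin q hq) ?_
  simp [PiLp.inner_apply, hc, ← sum_mul, sum_sub_distrib, hp.2, hq.2]

theorem eventuallyEq_meanCentering_add_const_of_isNearest (hn : n ≠ 0)
    {P : EuclideanSpace ℝ (Fin n) → EuclideanSpace ℝ (Fin n)}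
    (hP : ∀ z, P z ∈ hypersimplex n k ∧ ∀ w ∈ hypersimplex n k, ‖z - P z‖ ≤ ‖z - w‖)
    {w : EuclideanSpace ℝ (Fin n)} (hw : ∀ i, meanCentering n w i + k / n ∈ Set.Ioo 0 1) :
    P =ᶠ[𝓝 w] fun z => meanCentering n z + WithLp.toLp 2 (fun _ => k / n) := by
  have hnear : ∀ᶠ z in 𝓝 w, ∀ i, meanCentering n z i + k / n ∈ Set.Ioo 0 1 :=
    eventually_all.2 fun i =>
      (by fun_prop : Continuous fun z => meanCentering n z i + k / n).continuousAt.eventually_mem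
        (isOpen_Ioo.mem_nhds (hw i))
  refine hnear.mono fun z hz => ?_
  refine eq_of_mem_hypersimplex_of_forall_sub_eq (hP z).1 (hP z).2
    (meanCentering_add_const_mem_hypersimplex hn fun i => Set.Ioo_subset_Icc_self (hz i))
    (c := (n : ℝ)⁻¹ * ∑ j, z j - k / n) fun i => ?_
  simp only [PiLp.add_apply, meanCentering_apply]
  ring

end Hypersimplex

theorem hypersimplex_loss_gradient_general (n : ℕ) (hn : 1 ≤ n) (k : ℕ)
    (τ : ℝ)
    (y x : EuclideanSpace ℝ (Fin n))
    (P : EuclideanSpace ℝ (Fin n) → EuclideanSpace ℝ (Fin n))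
    (hP : ∀ z, P z ∈ hypersimplex n (k : ℝ) ∧
      ∀ w ∈ hypersimplex n (k : ℝ), ‖z - P z‖ ≤ ‖z - w‖)
    (hx : ∀ i, 0 < τ⁻¹ * x i - (∑ j, τ⁻¹ * x j - (k : ℝ)) / (n : ℝ) ∧
      τ⁻¹ * x i - (∑ j, τ⁻¹ * x j - (k : ℝ)) / (n : ℝ) < 1)
    (g : EuclideanSpace ℝ (Fin n))
    (hg : ∀ i, g i = (1 / τ) * ((P (τ⁻¹ • x) i - y i) -
      (1 / (n : ℝ)) * ∑ j, (P (τ⁻¹ • x) j - y j))) :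
    DifferentiableAt ℝ (fun z => (1 / 2 : ℝ) * ‖P (τ⁻¹ • z) - y‖ ^ 2) x ∧
    HasGradientAt (fun z => (1 / 2 : ℝ) * ‖P (τ⁻¹ • z) - y‖ ^ 2) g x := by
  set c : EuclideanSpace ℝ (Fin n) := WithLp.toLp 2 fun _ => (k : ℝ) / n
  set A := τ⁻¹ • meanCentering n
  have hx' : ∀ i, meanCentering n (τ⁻¹ • x) i + k / n ∈ Set.Ioo 0 1 := fun i => by
    have hcoord : meanCentering n (τ⁻¹ • x) i + k / n
        = τ⁻¹ * x i - (∑ j, τ⁻¹ * x j - k) / n := by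
      simp only [meanCentering_apply, PiLp.smul_apply, smul_eq_mul]
      ring
    exact hcoord ▸ hx i
  have hproj : (fun z => P (τ⁻¹ • z)) =ᶠ[𝓝 x] fun z => A z + c :=
    ((eventuallyEq_meanCentering_add_const_of_isNearest (by omega) hP hx').comp_tendsto
      (continuous_const_smul τ⁻¹).continuousAt).mono fun z hz => by simpa [A] using hz
  have hloss : (fun z => (1 / 2 : ℝ) * ‖P (τ⁻¹ • z) - y‖ ^ 2) =ᶠ[𝓝 x]
      fun z => (1 / 2 : ℝ) * ‖A z - (y - c)‖ ^ 2 :=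
    hproj.mono fun z hz => by simp only [hz, sub_sub_eq_add_sub]
  have hgrad : A.adjoint (A x - (y - c)) = g := by
    rw [((IsSelfAdjoint.all τ⁻¹).smul isSelfAdjoint_meanCentering).adjoint_eq,
      sub_sub_eq_add_sub, ← hproj.eq_of_nhds]
    ext i
    simp only [FunLike.coe_smul, Pi.smul_apply, PiLp.smul_apply, meanCentering_apply,
      smul_eq_mul, hg, one_div, PiLp.sub_apply]
  have h := (hasGradientAt_half_norm_sq_sub A (y - c) x).congr_of_eventuallyEq hloss
  rw [hgrad] at h
  exact ⟨h.differentiableAt, h⟩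

/-- Suppose all the coordinates of x/τ shifted by c = (∑ x_j/τ − k)/n lie strictly in
(0,1).  Then the HyperSimplex loss L(x) = ½‖Π_{Δ^n_k}(x/τ) − y‖² is differentiable
at x with gradient g given coordinatewise by
g_i = (1/τ)·[(ŷ_i − y_i) − (1/n)·∑_j (ŷ_j − y_j)] where ŷ = Π_{Δ^n_k}(x/τ).
Here P is the Euclidean projection onto the hypersimplex. -/
theorem hypersimplex_loss_gradient (n : ℕ) (hn : 1 ≤ n) (k : ℕ)
    (hk1 : 1 ≤ k) (hk2 : k ≤ n) (τ : ℝ) (hτ : 0 < τ)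
    (y x : EuclideanSpace ℝ (Fin n))
    (P : EuclideanSpace ℝ (Fin n) → EuclideanSpace ℝ (Fin n))
    (hP : ∀ z, P z ∈ hypersimplex n (k : ℝ) ∧
      ∀ w ∈ hypersimplex n (k : ℝ), ‖z - P z‖ ≤ ‖z - w‖)
    (hx : ∀ i, 0 < τ⁻¹ * x i - (∑ j, τ⁻¹ * x j - (k : ℝ)) / (n : ℝ) ∧
      τ⁻¹ * x i - (∑ j, τ⁻¹ * x j - (k : ℝ)) / (n : ℝ) < 1)
    (g : EuclideanSpace ℝ (Fin n))
    (hg : ∀ i, g i = (1 / τ) * ((P (τ⁻¹ • x) i - y i) -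
      (1 / (n : ℝ)) * ∑ j, (P (τ⁻¹ • x) j - y j))) :
    DifferentiableAt ℝ (fun z => (1 / 2 : ℝ) * ‖P (τ⁻¹ • z) - y‖ ^ 2) x ∧
    HasGradientAt (fun z => (1 / 2 : ℝ) * ‖P (τ⁻¹ • z) - y‖ ^ 2) g x :=
  hypersimplex_loss_gradient_general n hn k τ y x P hP hx g hg
end
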